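/- Let H be a Hilbert space, Ch : H → [0,∞] convex, lsc, 2-homogeneous, M > 0, Φ the restriction of Ch to E = {‖u‖ ≤ 1, Ch(u) ≤ M} (+∞ outside). If u lies on the unit sphere (‖u‖ = 1) with Ch(u) < M, then ∂Φ(u) = ∂Ch(u) + {2μu : μ ≥ 0}; in particular, denoting by -2Δu the element of minimal norm in ∂Ch(u) (assumed nonempty), if the descending slope of Φ_L = Φ - L‖·‖² vanishes at u for L > M, then -Δu = Ch(u)·u. -/

import Mathlib

open Filter Set
open scoped ENNReal RealInnerProductSpace

/-- Positive part of an extended real, as an element of `[0,∞]`. -/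
noncomputable def erealPos (x : EReal) : ℝ≥0∞ :=
  if x = ⊤ then ⊤ else ENNReal.ofReal x.toReal

/-- The descending slope `|∂Φ|(v) = limsup_{w→v} (Φ(v)-Φ(w))⁺ / ‖v-w‖`. -/
noncomputable def descSlope {H : Type*} [NormedAddCommGroup H]
    (Φ : H → EReal) (v : H) : ℝ≥0∞ :=
  Filter.limsup (fun w => erealPos (Φ v - Φ w) / ENNReal.ofReal ‖v - w‖)
    (nhdsWithin v {v}ᶜ)

lemma erealPos_coe (r : ℝ) : erealPos (r : EReal) = ENNReal.ofReal r := by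
  simp [erealPos, EReal.coe_ne_top]

lemma ch_comb {H : Type*} [NormedAddCommGroup H] [InnerProductSpace ℝ H]
    (Ch : H → ℝ≥0∞)
    (hconv : ∀ u v : H, ∀ t : ℝ, 0 ≤ t → t ≤ 1 →
      Ch (t • u + (1 - t) • v) ≤ ENNReal.ofReal t * Ch u + ENNReal.ofReal (1 - t) * Ch v)
    (hhom : ∀ (c : ℝ) (u : H), Ch (c • u) = ENNReal.ofReal (c ^ 2) * Ch u)
    (u v : H) (α β : ℝ) (hα : 0 ≤ α) (hβ : 0 ≤ β) :
    Ch (α • u + β • v) ≤ ENNReal.ofReal ((α+β)*α) * Ch u + ENNReal.ofReal ((α+β)*β) * Ch v := by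
  rcases eq_or_lt_of_le (add_nonneg hα hβ) with hs | hs
  · have hα0 : α = 0 := by linarith [hα, hβ]
    have hβ0 : β = 0 := by linarith
    subst hα0; subst hβ0
    simp only [zero_smul, add_zero, zero_add, zero_mul, ENNReal.ofReal_zero, zero_mul]
    have : Ch (0 : H) = 0 := by
      have := hhom 0 (0 : H)
      simpa using this
    simp [this]
  · set s := α + β with hs_def
    have hsne : s ≠ 0 := ne_of_gt hs
    have hrw : α • u + β • v = s • ((α/s) • u + (β/s) • v) := by
      rw [smul_add, smul_smul, smul_smul]
      field_simp
    rw [hrw, hhom]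
    have ht1 : α / s ≤ 1 := by
      rw [div_le_one hs]; linarith
    have ht0 : (0:ℝ) ≤ α / s := div_nonneg hα hs.le
    have hbs : (1 : ℝ) - α / s = β / s := by field_simp; ring
    have := hconv u v (α/s) ht0 ht1
    rw [hbs] at this
    calc ENNReal.ofReal (s ^ 2) * Ch ((α/s) • u + (β/s) • v)
        ≤ ENNReal.ofReal (s ^ 2) * (ENNReal.ofReal (α/s) * Ch u + ENNReal.ofReal (β/s) * Ch v) := by
          exact mul_le_mul_right this _
      _ = ENNReal.ofReal ((α+β)*α) * Ch u + ENNReal.ofReal ((α+β)*β) * Ch v := by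
          rw [mul_add, ← mul_assoc, ← mul_assoc, ← ENNReal.ofReal_mul (by positivity),
            ← ENNReal.ofReal_mul (by positivity)]
          congr 2
          · field_simp; rw [hs_def]; congr 1; ring
          · field_simp; rw [hs_def]; congr 1; ring

lemma euler_id {H : Type*} [NormedAddCommGroup H] [InnerProductSpace ℝ H]
    (Ch : H → ℝ≥0∞)
    (hhom : ∀ (c : ℝ) (u : H), Ch (c • u) = ENNReal.ofReal (c ^ 2) * Ch u)
    (u ξ : H) (hfin : Ch u ≠ ⊤)
    (hξ : ∀ v : H, (Ch u : EReal) + ((⟪ξ, v - u⟫ : ℝ) : EReal) ≤ (Ch v : EReal)) :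
    ⟪ξ, u⟫ = 2 * (Ch u).toReal := by
  set c := (Ch u).toReal with hc
  set t := (⟪ξ, u⟫ : ℝ) with ht
  have hc0 : 0 ≤ c := ENNReal.toReal_nonneg
  have key : ∀ s : ℝ, c + (s - 1) * t ≤ s^2 * c := by
    intro s
    have h1 := hξ (s • u)
    have h2 : Ch (s • u) = ENNReal.ofReal (s^2) * Ch u := hhom s u
    have hfin2 : Ch (s • u) ≠ ⊤ := by
      rw [h2]; exact ENNReal.mul_ne_top ENNReal.ofReal_ne_top hfin
    have h3 : (Ch (s • u)).toReal = s^2 * c := by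
      rw [h2, ENNReal.toReal_mul, ENNReal.toReal_ofReal (sq_nonneg s)]
    have h4 : (⟪ξ, s • u - u⟫ : ℝ) = (s - 1) * t := by
      rw [inner_sub_right, real_inner_smul_right]; ring
    have h5 : (Ch u : EReal) = ((c : ℝ) : EReal) := by
      conv_lhs => rw [← ENNReal.ofReal_toReal hfin]
      rw [EReal.coe_ennreal_ofReal, max_eq_left hc0]
    have h6 : (Ch (s • u) : EReal) = ((s^2 * c : ℝ) : EReal) := by
      conv_lhs => rw [← ENNReal.ofReal_toReal hfin2]
      rw [EReal.coe_ennreal_ofReal, h3, max_eq_left (by positivity)]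
    rw [h5, h6, h4, ← EReal.coe_add, EReal.coe_le_coe_iff] at h1
    exact h1
  have hres : t = 2*c := by
    set D := 2*c+1 with hDdef
    have hD : (0:ℝ) < D := by rw [hDdef]; linarith
    set h := (t-2*c)/D with hhdef
    have hhD : h*D = t - 2*c := div_mul_cancel₀ _ hD.ne'
    have h1 := key (1 + h)
    have h2 : h * (t - 2*c) ≤ h^2 * c := by nlinarith [h1]
    rw [← hhD] at h2
    have h3 : h^2 * (c+1) ≤ 0 := by rw [hDdef] at h2; nlinarith
    have h4 : h = 0 := by nlinarith [sq_nonneg h]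
    have : t - 2*c = 0 := by rw [← hhD, h4]; ring
    linarith
  linarith [hres]

set_option maxHeartbeats 1600000 in
/-- Structure of the subdifferential of the restricted functional `Φ` (equal to `Ch` on
`E = {‖v‖ ≤ 1, Ch(v) ≤ M}`, `+∞` outside) at a point `u` of the unit sphere with `Ch(u) < M`:
`∂Φ(u) = ∂Ch(u) + {2μu : μ ≥ 0}`. In particular, if `-2Δu` denotes the element of minimal
norm in `∂Ch(u)` and the descending slope of `Φ_L = Φ - L‖·‖²` vanishes at `u` for some
`L > M`, then `-Δu = Ch(u)·u`. -/
theorem subdiff_on_sphere_and_eigen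
    {H : Type*} [NormedAddCommGroup H] [InnerProductSpace ℝ H] [CompleteSpace H]
    (Ch : H → ℝ≥0∞)
    (hconv : ∀ u v : H, ∀ t : ℝ, 0 ≤ t → t ≤ 1 →
      Ch (t • u + (1 - t) • v) ≤ ENNReal.ofReal t * Ch u + ENNReal.ofReal (1 - t) * Ch v)
    (hlsc : LowerSemicontinuous Ch)
    (hhom : ∀ (c : ℝ) (u : H), Ch (c • u) = ENNReal.ofReal (c ^ 2) * Ch u)
    (M : ℝ) (hM : 0 < M)
    (Φ : H → ℝ≥0∞)
    (hΦ : ∀ v : H, Φ v =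
      if ‖v‖ ≤ 1 ∧ Ch v ≤ ENNReal.ofReal M then Ch v else ⊤)
    (u : H) (hu1 : ‖u‖ = 1) (hu2 : Ch u < ENNReal.ofReal M)
    -- `ξ₀ = -2Δu` is the element of minimal norm in `∂Ch(u)`, assumed nonempty:
    (ξ₀ : H)
    (hξ₀ : ∀ v : H, (Ch u : EReal) + ((⟪ξ₀, v - u⟫ : ℝ) : EReal) ≤ (Ch v : EReal))
    (hmin : ∀ ξ : H,
      (∀ v : H, (Ch u : EReal) + ((⟪ξ, v - u⟫ : ℝ) : EReal) ≤ (Ch v : EReal)) → ‖ξ₀‖ ≤ ‖ξ‖) :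
    -- (1) `∂Φ(u) = ∂Ch(u) + {2μu : μ ≥ 0}`:
    ({ζ : H | ∀ v : H, (Φ u : EReal) + ((⟪ζ, v - u⟫ : ℝ) : EReal) ≤ (Φ v : EReal)} =
      {ζ : H | ∃ ξ : H,
        (∀ v : H, (Ch u : EReal) + ((⟪ξ, v - u⟫ : ℝ) : EReal) ≤ (Ch v : EReal)) ∧
        ∃ μ : ℝ, 0 ≤ μ ∧ ζ = ξ + (2 * μ) • u}) ∧
    -- (2) if the slope of `Φ_L` vanishes at `u` for some `L > M`, then `-Δu = Ch(u)·u`: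
    (∀ L : ℝ, M < L →
      descSlope (fun v => (Φ v : EReal) - ((L * ‖v‖ ^ 2 : ℝ) : EReal)) u = 0 →
      (1 / 2 : ℝ) • ξ₀ = (Ch u).toReal • u) := by
  classical
  have hfinu : Ch u ≠ ⊤ := ne_top_of_lt hu2
  set c := (Ch u).toReal with hc
  have hc0 : 0 ≤ c := ENNReal.toReal_nonneg
  have hcM : c < M := by
    rw [hc]
    exact ENNReal.toReal_lt_of_lt_ofReal hu2
  have hcoe : ∀ w : H, Ch w ≠ ⊤ → (Ch w : EReal) = (((Ch w).toReal : ℝ) : EReal) := by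
    intro w hw
    conv_lhs => rw [← ENNReal.ofReal_toReal hw]
    rw [EReal.coe_ennreal_ofReal, max_eq_left ENNReal.toReal_nonneg]
  have hChu : (Ch u : EReal) = ((c : ℝ) : EReal) := hcoe u hfinu
  have hΦu : Φ u = Ch u := by rw [hΦ]; simp [hu1, hu2.le]
  have huu : (⟪u, u⟫ : ℝ) = 1 := by
    rw [real_inner_self_eq_norm_mul_norm, hu1]; norm_num
  have hE : ∀ w : H, ‖w‖ ≤ 1 → Ch w ≤ ENNReal.ofReal M → Φ w = Ch w := by
    intro w h1 h2
    rw [hΦ]; simp [h1, h2]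
  have part1 : ({ζ : H | ∀ v : H, (Φ u : EReal) + ((⟪ζ, v - u⟫ : ℝ) : EReal) ≤ (Φ v : EReal)} =
      {ζ : H | ∃ ξ : H,
        (∀ v : H, (Ch u : EReal) + ((⟪ξ, v - u⟫ : ℝ) : EReal) ≤ (Ch v : EReal)) ∧
        ∃ μ : ℝ, 0 ≤ μ ∧ ζ = ξ + (2 * μ) • u}) := by
    ext ζ
    simp only [Set.mem_setOf_eq]
    constructor
    · intro hζ
      set a := (⟪ζ, u⟫ : ℝ) with ha
      have hsub : ∀ w : H, ‖w‖ ≤ 1 → Ch w ≤ ENNReal.ofReal M →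
          c + ⟪ζ, w - u⟫ ≤ (Ch w).toReal := by
        intro w h1 h2
        have hfw : Ch w ≠ ⊤ := ne_top_of_le_ne_top ENNReal.ofReal_ne_top h2
        have h3 := hζ w
        rw [hΦu, hE w h1 h2, hChu, hcoe w hfw, ← EReal.coe_add, EReal.coe_le_coe_iff] at h3
        exact h3
      -- Step A : 2c ≤ ⟪ζ,u⟫
      have hA : 2 * c ≤ a := by
        have key : ∀ t : ℝ, t ∈ Ioo (0:ℝ) 1 → (2 - t) * c ≤ a := by
          intro t ht
          obtain ⟨ht0, ht1⟩ := ht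
          have hn : ‖(1 - t) • u‖ ≤ 1 := by
            rw [norm_smul, hu1, mul_one, Real.norm_eq_abs, abs_of_nonneg (by linarith)]
            linarith
          have hch : Ch ((1 - t) • u) = ENNReal.ofReal ((1-t)^2) * Ch u := hhom _ u
          have hle : Ch ((1 - t) • u) ≤ ENNReal.ofReal M := by
            rw [hch]
            calc ENNReal.ofReal ((1-t)^2) * Ch u ≤ 1 * Ch u := by
                  gcongr
                  exact ENNReal.ofReal_le_one.2 (by nlinarith)
              _ = Ch u := one_mul _
              _ ≤ ENNReal.ofReal M := hu2.le
          have h3 := hsub _ hn hle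
          have h4 : (Ch ((1-t) • u)).toReal = (1-t)^2 * c := by
            rw [hch, ENNReal.toReal_mul, ENNReal.toReal_ofReal (sq_nonneg _)]
          have h5 : (⟪ζ, (1-t) • u - u⟫ : ℝ) = -t * a := by
            rw [inner_sub_right, real_inner_smul_right]; ring
          rw [h4, h5] at h3
          nlinarith
        have htend : Tendsto (fun t : ℝ => (2 - t) * c)
            (nhdsWithin 0 (Ioi 0)) (nhds (2 * c)) := by
          have hco : Continuous (fun t : ℝ => (2 - t) * c) :=
            (continuous_const.sub continuous_id).mul continuous_const
          have h := hco.tendsto 0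
          have h2 : ((2:ℝ) - 0) * c = 2 * c := by norm_num
          rw [h2] at h
          exact h.mono_left nhdsWithin_le_nhds
        refine le_of_tendsto htend ?_
        filter_upwards [Ioo_mem_nhdsGT_of_mem
          (⟨le_refl (0:ℝ), one_pos⟩ : (0:ℝ) ∈ Ico (0:ℝ) 1)] with t ht
        exact key t ht
      -- Step B : key upper bound on ⟪ζ, v⟫ for all v with finite Ch
      have hB : ∀ v : H, Ch v ≠ ⊤ →
          (⟪ζ, v⟫ : ℝ) ≤ (Ch v).toReal + c + ⟪u, v⟫ * (a - 2 * c) := by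
        intro v hv
        set C := (Ch v).toReal with hCdef
        have hC0 : 0 ≤ C := ENNReal.toReal_nonneg
        set p := (⟪u, v⟫ : ℝ) with hpdef
        set b := (⟪ζ, v⟫ : ℝ) with hbdef
        set q := ‖v‖^2 with hqdef
        set d := q - p^2 with hddef
        have hd0 : 0 ≤ d := by
          have h1 := abs_real_inner_le_norm u v
          rw [hu1, one_mul] at h1
          have h2 := sq_abs (⟪u,v⟫ : ℝ)
          rw [hddef, hqdef, hpdef]
          nlinarith [norm_nonneg v, abs_nonneg (⟪u,v⟫ : ℝ)]
        have hChv : Ch v = ENNReal.ofReal C := (ENNReal.ofReal_toReal hv).symm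
        have hChu' : Ch u = ENNReal.ofReal c := (ENNReal.ofReal_toReal hfinu).symm
        set K := |c + C - 2*p*c| + |(1-p)*(C - p*c)| + |p| + 1 with hKdef
        have hK1 : 1 ≤ K := by
          have := abs_nonneg (c + C - 2*p*c)
          have := abs_nonneg ((1-p)*(C - p*c))
          have := abs_nonneg p
          rw [hKdef]; linarith
        have hK0 : 0 < K := by linarith
        set β₀ := min (1/K) ((M - c)/K) with hβ₀def
        have hβ₀pos : 0 < β₀ := by
          apply lt_min
          · positivity
          · apply div_pos (by linarith) hK0
        have main : ∀ β : ℝ, β ∈ Ioo 0 β₀ →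
            b * (1 + β^2*d) ≤ (c + C - 2*p*c + a*p) + β*((1-p)*(C-p*c) - 2*d*c + a*d)
              + β^2*(a*d*p) + β^3*(d^2*(a-c)) := by
          intro β hβ
          obtain ⟨hβ0, hββ⟩ := hβ
          have hβK1 : β * K ≤ 1 := by
            have h1 : β ≤ 1/K := le_of_lt (lt_of_lt_of_le hββ (min_le_left _ _))
            calc β * K ≤ (1/K) * K := by gcongr
              _ = 1 := by field_simp
          have hβKM : β * K ≤ M - c := by
            have h1 : β ≤ (M-c)/K := le_of_lt (lt_of_lt_of_le hββ (min_le_right _ _))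
            calc β * K ≤ ((M-c)/K) * K := by gcongr
              _ = M - c := by field_simp
          have hβ1 : β ≤ 1 := by nlinarith
          have hα0 : 0 ≤ 1 - β*p := by
            have h1 : β * p ≤ β * |p| := by
              have := le_abs_self p
              nlinarith
            have h2 : β * |p| ≤ β * K := by
              have h3 : |p| ≤ K := by
                have := abs_nonneg (c + C - 2*p*c)
                have := abs_nonneg ((1-p)*(C - p*c))
                rw [hKdef]; linarith
              nlinarith
            linarith
          set α := 1 - β*p with hαdef
          set m := 1 + β^2*d with hmdef
          have hm1 : 1 ≤ m := by rw [hmdef]; nlinarith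
          have hm0 : 0 < m := by linarith
          set w := α • u + β • v with hwdef
          have hwn : ‖w‖^2 = m := by
            rw [hwdef, norm_add_sq_real, norm_smul, norm_smul, real_inner_smul_left,
              real_inner_smul_right, hu1, Real.norm_eq_abs, Real.norm_eq_abs,
              abs_of_nonneg hα0, abs_of_pos hβ0]
            rw [hmdef, hαdef, hddef, hqdef, hpdef]
            ring
          have hchw : Ch w ≤ ENNReal.ofReal ((α+β)*α*c + (α+β)*β*C) := by
            calc Ch w ≤ ENNReal.ofReal ((α+β)*α) * Ch u + ENNReal.ofReal ((α+β)*β) * Ch v :=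
                ch_comb Ch hconv hhom u v α β hα0 hβ0.le
              _ = ENNReal.ofReal ((α+β)*α*c + (α+β)*β*C) := by
                  rw [hChu', hChv, ← ENNReal.ofReal_mul (by positivity),
                    ← ENNReal.ofReal_mul (by positivity),
                    ← ENNReal.ofReal_add (by positivity) (by positivity)]
          set R := (α+β)*α*c + (α+β)*β*C with hRdef
          have hR0 : 0 ≤ R := by
            rw [hRdef]
            have : 0 ≤ α + β := by linarith
            positivity
          have hRM : R ≤ M := by
            have hRex : R = c + β*(c + C - 2*p*c) + β^2*((1-p)*(C - p*c)) := by
              rw [hRdef, hαdef]; ring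
            have e1 : c + C - 2*p*c ≤ |c + C - 2*p*c| := le_abs_self _
            have e2 : (1-p)*(C - p*c) ≤ |(1-p)*(C - p*c)| := le_abs_self _
            have e3 : β^2*((1-p)*(C-p*c)) ≤ β * |(1-p)*(C-p*c)| := by
              have h4 : β^2*((1-p)*(C-p*c)) ≤ β^2 * |(1-p)*(C-p*c)| := by nlinarith
              have h5 : β^2 * |(1-p)*(C-p*c)| ≤ β * |(1-p)*(C-p*c)| := by
                nlinarith [mul_nonneg (mul_nonneg hβ0.le (abs_nonneg ((1-p)*(C-p*c))))
                  (by linarith : (0:ℝ) ≤ 1 - β)]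
              linarith
            have e4 : β*(c + C - 2*p*c) ≤ β * |c + C - 2*p*c| := by nlinarith
            have e5 : β * |c + C - 2*p*c| + β * |(1-p)*(C-p*c)| ≤ β * K := by
              have := abs_nonneg p
              rw [hKdef]; nlinarith
            rw [hRex]; linarith
          have hwm : ‖m⁻¹ • w‖ ≤ 1 := by
            rw [norm_smul, Real.norm_eq_abs, abs_of_pos (inv_pos.2 hm0)]
            have h1 : ‖w‖ ≤ m := by nlinarith [norm_nonneg w, hwn]
            calc m⁻¹ * ‖w‖ ≤ m⁻¹ * m := by gcongr
              _ = 1 := inv_mul_cancel₀ hm0.ne'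
          have hchw2 : Ch (m⁻¹ • w) ≤ ENNReal.ofReal (R / m^2) := by
            rw [hhom]
            calc ENNReal.ofReal (m⁻¹^2) * Ch w
                ≤ ENNReal.ofReal (m⁻¹^2) * ENNReal.ofReal R := by gcongr
              _ = ENNReal.ofReal (m⁻¹^2 * R) := (ENNReal.ofReal_mul (by positivity)).symm
              _ = ENNReal.ofReal (R / m^2) := by
                  congr 1
                  rw [inv_pow, div_eq_mul_inv, mul_comm]
          have hRm2 : R / m^2 ≤ M :=
            le_trans (div_le_self hR0 (by nlinarith)) hRM
          have hchwM : Ch (m⁻¹ • w) ≤ ENNReal.ofReal M :=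
            le_trans hchw2 (ENNReal.ofReal_le_ofReal hRm2)
          have hsub2 := hsub _ hwm hchwM
          have hto : (Ch (m⁻¹ • w)).toReal ≤ R / m^2 := by
            calc (Ch (m⁻¹ • w)).toReal ≤ (ENNReal.ofReal (R/m^2)).toReal :=
                ENNReal.toReal_mono ENNReal.ofReal_ne_top hchw2
              _ = R/m^2 := ENNReal.toReal_ofReal (by positivity)
          have hip : (⟪ζ, m⁻¹ • w - u⟫ : ℝ) = m⁻¹ * (α * a + β * b) - a := by
            rw [inner_sub_right, real_inner_smul_right, hwdef, inner_add_right,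
              real_inner_smul_right, real_inner_smul_right, ← ha, ← hbdef]
          have hineq : c + (m⁻¹ * (α*a + β*b) - a) ≤ R / m^2 := by
            rw [← hip]
            exact le_trans hsub2 hto
          have hineq2 : (c - a) * m^2 + (α*a + β*b) * m ≤ R := by
            have h2 : (c + (m⁻¹ * (α*a+β*b) - a)) * m^2 ≤ (R/m^2) * m^2 :=
              mul_le_mul_of_nonneg_right hineq (by positivity)
            have e1 : (R/m^2)*m^2 = R := div_mul_cancel₀ _ (by positivity)
            have e2 : (c + (m⁻¹ * (α*a+β*b) - a)) * m^2 = (c - a)*m^2 + (α*a+β*b)*m := by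
              field_simp
              ring
            rw [e1, e2] at h2
            exact h2
          have hpoly : β * ((c + C - 2*p*c + a*p) + β*((1-p)*(C-p*c) - 2*d*c + a*d)
              + β^2*(a*d*p) + β^3*(d^2*(a-c)) - b*(1+β^2*d))
              = R - ((c - a) * m^2 + (α*a + β*b) * m) := by
            rw [hRdef, hαdef, hmdef]; ring
          have h3 : 0 ≤ β * ((c + C - 2*p*c + a*p) + β*((1-p)*(C-p*c) - 2*d*c + a*d)
              + β^2*(a*d*p) + β^3*(d^2*(a-c)) - b*(1+β^2*d)) := by
            rw [hpoly]; linarith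
          have h4 : 0 ≤ (c + C - 2*p*c + a*p) + β*((1-p)*(C-p*c) - 2*d*c + a*d)
              + β^2*(a*d*p) + β^3*(d^2*(a-c)) - b*(1+β^2*d) := by
            have h5 := div_nonneg h3 hβ0.le
            rwa [mul_div_cancel_left₀ _ hβ0.ne'] at h5
          rw [← hmdef] at h4
          linarith
        have htends : Tendsto (fun β : ℝ => (c + C - 2*p*c + a*p)
            + β*((1-p)*(C-p*c) - 2*d*c + a*d) + β^2*(a*d*p) + β^3*(d^2*(a-c))
            - b*(1+β^2*d)) (nhdsWithin 0 (Ioi 0)) (nhds (c + C - 2*p*c + a*p - b)) := by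
          have hco : Continuous (fun β : ℝ => (c + C - 2*p*c + a*p)
              + β*((1-p)*(C-p*c) - 2*d*c + a*d) + β^2*(a*d*p) + β^3*(d^2*(a-c))
              - b*(1+β^2*d)) := by fun_prop
          have h := hco.tendsto 0
          have h2 : (c + C - 2*p*c + a*p) + 0*((1-p)*(C-p*c) - 2*d*c + a*d)
              + 0^2*(a*d*p) + 0^3*(d^2*(a-c)) - b*(1+0^2*d)
              = c + C - 2*p*c + a*p - b := by norm_num
          rw [h2] at h
          exact h.mono_left nhdsWithin_le_nhds
        have hfin2 : 0 ≤ c + C - 2*p*c + a*p - b := by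
          refine ge_of_tendsto htends ?_
          filter_upwards [Ioo_mem_nhdsGT_of_mem
            (⟨le_refl (0:ℝ), hβ₀pos⟩ : (0:ℝ) ∈ Ico (0:ℝ) β₀)] with β hβ
          linarith [main β hβ]
        nlinarith [hfin2]
      -- Step C : assemble
      refine ⟨ζ - (a - 2*c) • u, ?_, (a - 2*c)/2, by linarith, ?_⟩
      · intro v
        by_cases hv : Ch v = ⊤
        · rw [hv, EReal.coe_ennreal_top]
          exact le_top
        · have hBv := hB v hv
          rw [hChu, hcoe v hv, ← EReal.coe_add, EReal.coe_le_coe_iff]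
          have hip : (⟪ζ - (a-2*c)•u, v - u⟫ : ℝ)
              = ⟪ζ,v⟫ - a - (a-2*c)*(⟪u,v⟫ - 1) := by
            rw [inner_sub_left, inner_sub_right, inner_sub_right, real_inner_smul_left,
              real_inner_smul_left, huu, ← ha]
            ring
          rw [hip]
          nlinarith [hBv]
      · have h2 : 2*((a-2*c)/2) = a - 2*c := by ring
        rw [h2, sub_add_cancel]
    · rintro ⟨ξ, hξs, μ, hμ, rfl⟩
      intro v
      rw [hΦu, hΦ v]
      split_ifs with hv
      · obtain ⟨hv1, hv2⟩ := hv
        have h1 := hξs v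
        have hpv : (⟪u, v⟫:ℝ) ≤ 1 := by
          calc (⟪u,v⟫:ℝ) ≤ ‖u‖ * ‖v‖ := real_inner_le_norm u v
            _ ≤ 1 := by rw [hu1, one_mul]; exact hv1
        have hip : (⟪ξ + (2*μ)•u, v - u⟫ : ℝ) = ⟪ξ, v-u⟫ + 2*μ*(⟪u,v⟫ - 1) := by
          rw [inner_add_left, real_inner_smul_left, inner_sub_right, inner_sub_right, huu]
        calc (Ch u : EReal) + ((⟪ξ + (2*μ)•u, v - u⟫:ℝ) : EReal)
            ≤ (Ch u : EReal) + ((⟪ξ, v - u⟫:ℝ) : EReal) := by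
              refine add_le_add le_rfl ?_
              rw [EReal.coe_le_coe_iff, hip]
              nlinarith
          _ ≤ (Ch v : EReal) := h1
      · exact le_top
  refine ⟨part1, ?_⟩
  intro L hL hslope
  have hmem : ((2*L)•u) ∈ {ζ : H | ∀ v : H,
      (Φ u : EReal) + ((⟪ζ, v - u⟫ : ℝ) : EReal) ≤ (Φ v : EReal)} := by
    intro v
    rw [hΦ v]
    split_ifs with hv
    · obtain ⟨hv1, hv2⟩ := hv
      have hfv : Ch v ≠ ⊤ := ne_top_of_le_ne_top ENNReal.ofReal_ne_top hv2
      set C := (Ch v).toReal with hCdef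
      have hC0 : 0 ≤ C := ENNReal.toReal_nonneg
      rw [hΦu, hChu, hcoe v hfv, ← EReal.coe_add, EReal.coe_le_coe_iff, ← hCdef]
      have hip : (⟪(2*L)•u, v - u⟫:ℝ) = 2*L*⟪u, v-u⟫ := by
        rw [real_inner_smul_left]
      rw [hip]
      by_cases hvu : v = u
      · rw [hvu, sub_self, inner_zero_right, hCdef, hvu, ← hc]
        norm_num
      · have hvu' : 0 < ‖v - u‖ := by
          rw [norm_pos_iff]
          exact sub_ne_zero.2 hvu
        have key : ∀ ε : ℝ, 0 < ε → c + 2*L*⟪u, v - u⟫ ≤ C + ε * (‖v - u‖ + 1) := by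
          intro ε hε
          have h0 : Filter.limsup (fun w => erealPos
              ((fun x => (Φ x : EReal) - ((L * ‖x‖ ^ 2 : ℝ) : EReal)) u
                - (fun x => (Φ x : EReal) - ((L * ‖x‖ ^ 2 : ℝ) : EReal)) w)
              / ENNReal.ofReal ‖u - w‖) (nhdsWithin u {u}ᶜ) < ENNReal.ofReal ε := by
            have h00 := hslope
            rw [descSlope] at h00
            rw [h00]
            exact ENNReal.ofReal_pos.2 hε
          have hev := Filter.eventually_lt_of_limsup_lt h0
          obtain ⟨δ, hδ0, hδ⟩ := (Metric.nhdsWithin_basis_ball.eventually_iff).1 hev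
          set t := min (1/2) (min (δ/(2*‖v-u‖)) (ε/(|L| * ‖v-u‖^2 + 1))) with htdef
          have ht0 : 0 < t := by
            apply lt_min (by norm_num)
            apply lt_min
            · positivity
            · positivity
          have ht1 : t ≤ 1/2 := min_le_left _ _
          have htδ : t ≤ δ/(2*‖v-u‖) := le_trans (min_le_right _ _) (min_le_left _ _)
          have htε : t ≤ ε/(|L| * ‖v-u‖^2 + 1) := le_trans (min_le_right _ _) (min_le_right _ _)
          set w := u + t • (v - u) with hwdef
          have hwsub : w - u = t • (v - u) := by rw [hwdef]; abel
          have hwu : w ≠ u := by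
            intro hcon
            have h5 : t • (v - u) = 0 := by rw [← hwsub, hcon, sub_self]
            rcases smul_eq_zero.1 h5 with h | h
            · exact ht0.ne' h
            · exact hvu (sub_eq_zero.1 h)
          have hwnorm : ‖w - u‖ = t * ‖v - u‖ := by
            rw [hwsub, norm_smul, Real.norm_eq_abs, abs_of_pos ht0]
          have hdist : dist w u < δ := by
            rw [dist_eq_norm, hwnorm]
            calc t * ‖v-u‖ ≤ (δ/(2*‖v-u‖)) * ‖v-u‖ := by gcongr
              _ = δ/2 := by field_simp
              _ < δ := by linarith
          have hwE1 : ‖w‖ ≤ 1 := by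
            have hrw : w = (1-t) • u + t • v := by
              rw [hwdef, smul_sub]
              module
            rw [hrw]
            calc ‖(1-t) • u + t • v‖ ≤ ‖(1-t) • u‖ + ‖t • v‖ := norm_add_le _ _
              _ = (1-t) * ‖u‖ + t * ‖v‖ := by
                  rw [norm_smul, norm_smul, Real.norm_eq_abs, Real.norm_eq_abs,
                    abs_of_nonneg (by linarith), abs_of_pos ht0]
              _ ≤ 1 := by
                  rw [hu1, mul_one]
                  linarith [mul_le_mul_of_nonneg_left hv1 ht0.le]
          have hrw2 : w = t • v + (1-t) • u := by
            rw [hwdef, smul_sub]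
            module
          have hwE2 : Ch w ≤ ENNReal.ofReal M := by
            rw [hrw2]
            calc Ch (t • v + (1-t) • u)
                ≤ ENNReal.ofReal t * Ch v + ENNReal.ofReal (1-t) * Ch u :=
                  hconv v u t ht0.le (by linarith)
              _ ≤ ENNReal.ofReal t * ENNReal.ofReal M
                  + ENNReal.ofReal (1-t) * ENNReal.ofReal M := by gcongr
              _ = ENNReal.ofReal (t*M) + ENNReal.ofReal ((1-t)*M) := by
                  rw [← ENNReal.ofReal_mul ht0.le, ← ENNReal.ofReal_mul (by linarith)]
              _ = ENNReal.ofReal (t*M + (1-t)*M) := by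
                  rw [← ENNReal.ofReal_add (by positivity) (by nlinarith)]
              _ = ENNReal.ofReal M := by
                  congr 1
                  ring
          have hfw : Ch w ≠ ⊤ := ne_top_of_le_ne_top ENNReal.ofReal_ne_top hwE2
          have hΦw : Φ w = Ch w := hE w hwE1 hwE2
          set Cw := (Ch w).toReal with hCwdef
          have hCwle : Cw ≤ t*C + (1-t)*c := by
            have h1 : Ch w ≤ ENNReal.ofReal (t*C + (1-t)*c) := by
              rw [hrw2]
              calc Ch (t • v + (1-t) • u)
                  ≤ ENNReal.ofReal t * Ch v + ENNReal.ofReal (1-t) * Ch u :=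
                    hconv v u t ht0.le (by linarith)
                _ = ENNReal.ofReal (t*C + (1-t)*c) := by
                    conv_lhs => rw [← ENNReal.ofReal_toReal hfv, ← ENNReal.ofReal_toReal hfinu]
                    rw [← hCdef, ← hc, ← ENNReal.ofReal_mul ht0.le,
                      ← ENNReal.ofReal_mul (by linarith),
                      ← ENNReal.ofReal_add (mul_nonneg ht0.le hC0)
                        (mul_nonneg (by linarith) hc0)]
            calc Cw ≤ (ENNReal.ofReal (t*C + (1-t)*c)).toReal :=
                ENNReal.toReal_mono ENNReal.ofReal_ne_top h1
              _ = t*C + (1-t)*c := ENNReal.toReal_ofReal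
                  (by nlinarith [mul_nonneg ht0.le hC0, mul_nonneg (by linarith : (0:ℝ) ≤ 1-t) hc0])
          have hP := hδ ⟨Metric.mem_ball.2 hdist, Set.mem_compl_singleton_iff.2 hwu⟩
          have hFu : (fun x => (Φ x : EReal) - ((L * ‖x‖ ^ 2 : ℝ) : EReal)) u
              - (fun x => (Φ x : EReal) - ((L * ‖x‖ ^ 2 : ℝ) : EReal)) w
              = (((c - L) - (Cw - L*‖w‖^2) : ℝ) : EReal) := by
            simp only
            rw [hΦu, hΦw, hChu, hcoe w hfw, ← hCwdef, hu1]
            norm_cast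
            ring
          rw [hFu, erealPos_coe] at hP
          have hnw : ‖u - w‖ = t*‖v-u‖ := by rw [norm_sub_rev, hwnorm]
          rw [hnw] at hP
          have hden0 : ENNReal.ofReal (t*‖v-u‖) ≠ 0 := by
            rw [Ne, ENNReal.ofReal_eq_zero, not_le]
            positivity
          have h2 := (ENNReal.div_lt_iff (Or.inl hden0) (Or.inl ENNReal.ofReal_ne_top)).1 hP
          rw [← ENNReal.ofReal_mul hε.le] at h2
          have h3 : (c - L) - (Cw - L*‖w‖^2) ≤ ε*(t*‖v-u‖) := by
            rcases le_or_gt ((c - L) - (Cw - L*‖w‖^2)) 0 with h4 | h4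
            · nlinarith [mul_pos hε (mul_pos ht0 hvu')]
            · exact le_of_lt ((ENNReal.ofReal_lt_ofReal_iff (by positivity)).1 h2)
          have hw2 : ‖w‖^2 = 1 + 2*(t*⟪u,v-u⟫) + t^2*‖v-u‖^2 := by
            rw [hwdef, norm_add_sq_real, real_inner_smul_right, norm_smul, hu1,
              Real.norm_eq_abs, abs_of_pos ht0]
            ring
          have htε2 : t*(|L| * ‖v-u‖^2) ≤ ε := by
            have hD0 : (0:ℝ) ≤ |L| * ‖v-u‖^2 := by positivity
            calc t*(|L| * ‖v-u‖^2) ≤ (ε/(|L| * ‖v-u‖^2 + 1))*(|L| * ‖v-u‖^2) := by gcongr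
              _ ≤ ε := by
                  rw [div_mul_eq_mul_div, div_le_iff₀ (by positivity)]
                  nlinarith
          rw [hw2] at h3
          have h5 : t*(c - C + 2*L*⟪u,v-u⟫) ≤ t*(ε*‖v-u‖ + ε) := by
            nlinarith [h3, hCwle, mul_le_mul_of_nonneg_left htε2 ht0.le, neg_abs_le L,
              sq_nonneg (t*‖v-u‖), abs_nonneg L, ht0.le]
          have h6 : c - C + 2*L*⟪u,v-u⟫ ≤ ε*‖v-u‖ + ε := le_of_mul_le_mul_left h5 ht0
          linarith
        refine le_of_forall_pos_le_add ?_
        intro ε hε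
        have h1 := key (ε/(‖v-u‖+1)) (by positivity)
        have h2 : (ε/(‖v-u‖+1)) * (‖v-u‖+1) = ε := by field_simp
        rw [h2] at h1
        exact h1
    · exact le_top
  have hmem2 := hmem
  rw [part1] at hmem2
  simp only [Set.mem_setOf_eq] at hmem2
  obtain ⟨ξ, hξmem, μ, hμ0, hζeq⟩ := hmem2
  have hξu : ξ = (2*L - 2*μ) • u := by
    have h1 : ξ = (2*L)•u - (2*μ)•u := by
      rw [hζeq]; abel
    rw [h1, ← sub_smul]
  have hE1 := euler_id Ch hhom u ξ hfinu hξmem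
  have hLμ : 2*L - 2*μ = 2*c := by
    rw [hξu, real_inner_smul_left, huu] at hE1
    rw [← hc] at hE1
    linarith
  have hξc : ξ = (2*c) • u := by rw [hξu, hLμ]
  have hnorm := hmin ξ hξmem
  rw [hξc, norm_smul, hu1, mul_one, Real.norm_eq_abs, abs_of_nonneg (by linarith)] at hnorm
  have hE0' := euler_id Ch hhom u ξ₀ hfinu hξ₀
  rw [← hc] at hE0'
  have hz : ‖ξ₀ - (2*c)•u‖^2 ≤ 0 := by
    rw [norm_sub_sq_real, real_inner_smul_right, hE0', norm_smul, hu1, mul_one,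
      Real.norm_eq_abs]
    nlinarith [sq_abs (2*c), hnorm, norm_nonneg ξ₀]
  have hz2 : ξ₀ = (2*c)•u := by
    have h1 := norm_nonneg (ξ₀ - (2*c)•u)
    have h2 : ‖ξ₀ - (2*c)•u‖ = 0 := by nlinarith
    rw [norm_eq_zero, sub_eq_zero] at h2
    exact h2
  rw [hz2, smul_smul]
  congr 1
  ring
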